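/- Let Q be a discrete memoryless channel with finite input and output alphabets, let p_min be its smallest nonzero transition probability, let w⃗_0, w⃗_1 be input strings of length n such that for every i the distributions Q(·|w⃗_0^{(i)}) and Q(·|w⃗_1^{(i)}) have a common support point, and let D_0, D_1 be a partition of the n-fold output alphabet. Define p_{e,0} = Q^n(D_1 | w⃗_0) and p_{e,1} = Q^n(D_0 | w⃗_1). Then −log(p_{e,0} + p_{e,1}) ≤ max_{0≤s≤1} d_C(w⃗_0, w⃗_1, Q^n, s) + √(2n)·log(1/p_min) + log 4. -/

import Mathlib

open scoped BigOperators
open Finset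

noncomputable section

/-- A probability mass function on a finite type, given as a real-valued function. -/
def IsPMF {α : Type*} [Fintype α] (p : α → ℝ) : Prop :=
  (∀ x, 0 ≤ p x) ∧ ∑ x, p x = 1

/-- A discrete memoryless channel: every input symbol yields a PMF on outputs. -/
def IsChannel {X Y : Type*} [Fintype Y] (P : X → Y → ℝ) : Prop :=
  ∀ x, IsPMF (P x)

/-- The Chernoff sum `Σ_x p(x)^{1-s} q(x)^s`, with terms where `p` or `q` vanish removed;
this realizes the continuous extension to the endpoints `s ∈ {0,1}`. -/
def cherSum {α : Type*} [Fintype α] (p q : α → ℝ) (s : ℝ) : ℝ :=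
  ∑ x, if p x = 0 ∨ q x = 0 then 0 else p x ^ (1 - s) * q x ^ s

/-- The Chernoff divergence `d_C(p, q, s)`. -/
def dC {α : Type*} [Fintype α] (p q : α → ℝ) (s : ℝ) : ℝ :=
  - Real.log (cherSum p q s)

/-- First derivative of the Chernoff divergence with respect to `s`. -/
def dC' {α : Type*} [Fintype α] (p q : α → ℝ) (s : ℝ) : ℝ :=
  deriv (dC p q) s

/-- Second derivative of the Chernoff divergence with respect to `s`. -/
def dC'' {α : Type*} [Fintype α] (p q : α → ℝ) (s : ℝ) : ℝ :=
  deriv (deriv (dC p q)) s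

/-- The tilted distribution `Q_s`. -/
def tilted {α : Type*} [Fintype α] (p q : α → ℝ) (s : ℝ) (x : α) : ℝ :=
  (if p x = 0 ∨ q x = 0 then 0 else p x ^ (1 - s) * q x ^ s) / cherSum p q s

/-- Kullback–Leibler divergence (natural log), with the convention `0 log 0 = 0`. -/
def KLdiv {α : Type*} [Fintype α] (p q : α → ℝ) : ℝ :=
  ∑ x, if p x = 0 then 0 else p x * Real.log (p x / q x)

/-- Product (memoryless) output distribution of a channel given an input string. -/
def prodDist {X Y : Type*} [Fintype Y] {n : ℕ} (P : X → Y → ℝ) (w : Fin n → X) :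
    (Fin n → Y) → ℝ :=
  fun y => ∏ i, P (w i) (y i)

/-- Two distributions have a common support point. -/
def CommonSupport {α : Type*} (p q : α → ℝ) : Prop :=
  ∃ x, p x ≠ 0 ∧ q x ≠ 0

/-- `pmin` is the smallest nonzero transition probability of the channel `Q`. -/
def MinTransChan {X Y : Type*} (Q : X → Y → ℝ) (pmin : ℝ) : Prop :=
  0 < pmin ∧ (∃ x y, Q x y = pmin) ∧ ∀ x y, Q x y ≠ 0 → pmin ≤ Q x y

/-- `pmin` is the smallest nonzero transition probability among the channels `P` and `Q`. -/
def MinTransPair {Y Z : Type*} (P : Bool → Y → ℝ) (Q : Bool → Z → ℝ) (pmin : ℝ) : Prop :=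
  0 < pmin ∧ ((∃ b y, P b y = pmin) ∨ (∃ b z, Q b z = pmin)) ∧
    (∀ b y, P b y ≠ 0 → pmin ≤ P b y) ∧ ∀ b z, Q b z ≠ 0 → pmin ≤ Q b z

/-- `pmin` is the smallest nonzero probability among the values of two distributions. -/
def MinProbPair {α : Type*} (p q : α → ℝ) (pmin : ℝ) : Prop :=
  0 < pmin ∧ ((∃ x, p x = pmin) ∨ (∃ x, q x = pmin)) ∧
    (∀ x, p x ≠ 0 → pmin ≤ p x) ∧ ∀ x, q x ≠ 0 → pmin ≤ q x

/-- A deterministic `n`-step 2-hop protocol: codewords `x false = x⃗₀`, `x true = x⃗₁`,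
relay maps (the `i`-th transmission may depend only on the previously received symbols),
and a decoder. -/
structure DetProtocol (Y Z : Type*) (n : ℕ) where
  x : Bool → Fin n → Bool
  relay : (i : Fin n) → (Fin i → Y) → Bool
  dec : (Fin n → Z) → Bool

/-- The relay transmissions `W_1, …, W_n` determined by the received sequence `y`. -/
def DetProtocol.W {Y Z : Type*} {n : ℕ} (π : DetProtocol Y Z n) (y : Fin n → Y)
    (i : Fin n) : Bool :=
  π.relay i (fun j => y (Fin.castLE i.isLt.le j))

/-- `errProb P Q π b` is the conditional error probability `ℙ(Θ̂ = ¬b ∣ Θ = b)`. -/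
def errProb {Y Z : Type*} [Fintype Y] [Fintype Z] {n : ℕ}
    (P : Bool → Y → ℝ) (Q : Bool → Z → ℝ) (π : DetProtocol Y Z n) (b : Bool) : ℝ :=
  ∑ y : Fin n → Y, ∑ z : Fin n → Z,
    prodDist P (π.x b) y * prodDist Q (π.W y) z *
      (if π.dec z = !b then 1 else 0)

/-- Probability (given `Θ = b`) that the relay receives the prefix `ypre` in the
first `k` time steps. -/
def prefixProb {Y Z : Type*} [Fintype Y] {n : ℕ} (P : Bool → Y → ℝ)
    (π : DetProtocol Y Z n) (b : Bool) {k : ℕ} (hk : k ≤ n) (ypre : Fin k → Y) : ℝ :=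
  ∏ i : Fin k, P (π.x b (Fin.castLE hk i)) (ypre i)

/-- `errGiven P Q π b hk ypre` is the conditional error probability `p_{e,b}(y_{1…k})`:
the probability that `Θ̂ = ¬b` given `Θ = b` and that the relay receives `ypre` in the
first `k` time steps. -/
def errGiven {Y Z : Type*} [Fintype Y] [Fintype Z] {n : ℕ}
    (P : Bool → Y → ℝ) (Q : Bool → Z → ℝ) (π : DetProtocol Y Z n) (b : Bool)
    {k : ℕ} (hk : k ≤ n) (ypre : Fin k → Y) : ℝ :=
  (∑ y : Fin n → Y, ∑ z : Fin n → Z,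
      Set.indicator {y' : Fin n → Y | ∀ i : Fin k, y' (Fin.castLE hk i) = ypre i}
          (fun _ => (1 : ℝ)) y *
        prodDist P (π.x b) y * prodDist Q (π.W y) z *
        (if π.dec z = !b then 1 else 0)) /
    prefixProb P π b hk ypre

/-- The first `k` relay transmissions `w⃗(y_{1…k})`, determined by the first `k`
received symbols. -/
def relayPrefix {Y Z : Type*} {n : ℕ} (π : DetProtocol Y Z n) {k : ℕ} (hk : k ≤ n)
    (ypre : Fin k → Y) (i : Fin k) : Bool :=
  π.relay (Fin.castLE hk i) (fun j => ypre (Fin.castLE i.isLt.le j))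

/-- Probability that the decoder outputs `b` when the relay input string is `w`. -/
def decProb {Z : Type*} [Fintype Z] {n : ℕ} (Q : Bool → Z → ℝ)
    (dec : (Fin n → Z) → Bool) (b : Bool) (w : Fin n → Bool) : ℝ :=
  ∑ z : Fin n → Z, prodDist Q w z * (if dec z = b then 1 else 0)

/-- `w` extends the relay's first `k` transmissions (after receiving `ypre`) to length `n`,
minimizing the probability that the decoder outputs `b`, i.e. `w = w⃗_{1-b}(y_{1…k})`. -/
def IsBestExtension {Y Z : Type*} [Fintype Z] {n : ℕ} (Q : Bool → Z → ℝ)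
    (π : DetProtocol Y Z n) (b : Bool) {k : ℕ} (hk : k ≤ n) (ypre : Fin k → Y)
    (w : Fin n → Bool) : Prop :=
  (∀ i : Fin k, w (Fin.castLE hk i) = relayPrefix π hk ypre i) ∧
    ∀ w' : Fin n → Bool,
      (∀ i : Fin k, w' (Fin.castLE hk i) = relayPrefix π hk ypre i) →
        decProb Q π.dec b w ≤ decProb Q π.dec b w'

/-- A randomized `n`-step 2-hop protocol: a finite collection of deterministic
protocols together with a probability distribution (the shared private randomness). -/
structure RandProtocol (Y Z : Type*) (n : ℕ) where
  m : ℕ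
  ρ : Fin m → ℝ
  det : Fin m → DetProtocol Y Z n

/-- Validity of the randomness distribution of a randomized protocol. -/
def RandProtocol.Valid {Y Z : Type*} {n : ℕ} (π : RandProtocol Y Z n) : Prop :=
  (∀ r, 0 ≤ π.ρ r) ∧ ∑ r, π.ρ r = 1

/-- Overall error probability `ℙ(Θ̂ ≠ Θ)` of a randomized protocol, with `Θ` uniform. -/
def randPe {Y Z : Type*} [Fintype Y] [Fintype Z] {n : ℕ}
    (P : Bool → Y → ℝ) (Q : Bool → Z → ℝ) (π : RandProtocol Y Z n) : ℝ :=
  ∑ r, π.ρ r * ((errProb P Q (π.det r) false + errProb P Q (π.det r) true) / 2)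

/-- The 2-hop error exponent `E(P,Q)`: the supremum, over sequences of (randomized)
protocols, of the liminf of `-(1/n) log P_e(n,P,Q)`. -/
def twoHopExponent {Y Z : Type*} [Fintype Y] [Fintype Z]
    (P : Bool → Y → ℝ) (Q : Bool → Z → ℝ) : ℝ :=
  sSup { E | ∃ π : (n : ℕ) → RandProtocol Y Z n, (∀ n, (π n).Valid) ∧
    E = Filter.liminf (fun n : ℕ => -(1 / (n : ℝ)) * Real.log (randPe P Q (π n)))
          Filter.atTop }

/-- `m` is the unique global maximizer of `g` on `[0,1]`. -/
def UniqueArgmax (g : ℝ → ℝ) (m : ℝ) : Prop :=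
  m ∈ Set.Icc (0 : ℝ) 1 ∧ ∀ s ∈ Set.Icc (0 : ℝ) 1, s ≠ m → g s < g m

/-- `g` is skewed with respect to `s*`. -/
def SkewedFun (sStar : ℝ) (g : ℝ → ℝ) : Prop :=
  ∃ m, UniqueArgmax g m ∧ (m < sStar ∨ 1 - sStar < m)

/-- `g` is balanced with respect to `s*`. -/
def BalancedFun (sStar : ℝ) (g : ℝ → ℝ) : Prop :=
  ∃ m, UniqueArgmax g m ∧ sStar < m ∧ m < 1 - sStar

/-- `g` is neutral with respect to `s*`. -/
def NeutralFun (sStar : ℝ) (g : ℝ → ℝ) : Prop :=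
  ∃ m, UniqueArgmax g m ∧ (m = sStar ∨ m = 1 - sStar)

/-- `g` and `h` are of strictly opposite type w.r.t. `s*`. -/
def StrictlyOppositeType (sStar : ℝ) (g h : ℝ → ℝ) : Prop :=
  (SkewedFun sStar g ∧ BalancedFun sStar h) ∨ (BalancedFun sStar g ∧ SkewedFun sStar h)

/-- `g` and `h` are of weakly opposite type w.r.t. `s*`. -/
def WeaklyOppositeType (sStar : ℝ) (g h : ℝ → ℝ) : Prop :=
  ((SkewedFun sStar g ∨ NeutralFun sStar g) ∧ (BalancedFun sStar h ∨ NeutralFun sStar h)) ∨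
    ((BalancedFun sStar g ∨ NeutralFun sStar g) ∧ (SkewedFun sStar h ∨ NeutralFun sStar h))

/-- `g` is non-constant on `[0,1]`. -/
def NonConstantOn (g : ℝ → ℝ) : Prop :=
  ∃ s₁ ∈ Set.Icc (0 : ℝ) 1, ∃ s₂ ∈ Set.Icc (0 : ℝ) 1, g s₁ ≠ g s₂

/-- The quantity `E_s` from the paper. -/
def Efun {Y Z : Type*} [Fintype Y] [Fintype Z]
    (P : Bool → Y → ℝ) (Q : Bool → Z → ℝ) (s : ℝ) : ℝ :=
  min (max (dC (P false) (P true) s) (dC (P false) (P true) (1 - s)))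
      (max (dC (Q false) (Q true) s) (dC (Q false) (Q true) (1 - s)))



open Real Set

/-! Let `s` maximise `d_C(P₀, P₁, ·)` on `[0, 1]`, let `W` be the tilted distribution
`∝ P₀^{1-s} P₁^s` and `L = log (P₁ / P₀)`. Pointwise
`min(P₀, P₁) = P₀^{1-s} P₁^s · exp (-((2s - 1) L + |L|) / 2)`, so Jensen's inequality under `W`
gives `-log Σ min(P₀, P₁) ≤ d_C(s) + E_W[(2s - 1) L + |L|] / 2`. Since `E_W L = -d_C'(s)`,
first-order optimality of `s` on `[0, 1]` gives `(2s - 1) E_W L + |E_W L| ≤ 0`, which leaves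
`E_W |L - E_W L| / 2 ≤ √(Var_W L) / 2`. For a memoryless channel `W` is a product measure and `L`
a sum of independent terms bounded by `log (1 / p_min)`, so `Var_W L ≤ n log² (1 / p_min)`.
Finally the error probability of any decision rule is at least `Σ min(P₀, P₁)`. -/

def chernoffTerm {α : Type*} (p q : α → ℝ) (s : ℝ) (x : α) : ℝ :=
  if p x = 0 ∨ q x = 0 then 0 else p x ^ (1 - s) * q x ^ s

-- Junk (`log 0 = 0`) off the common support of `p` and `q`; it is only ever weighted by `tilted`,
-- which vanishes there.
def logRatio {α : Type*} (p q : α → ℝ) (x : α) : ℝ :=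
  log (q x) - log (p x)

theorem IsMaxOn.hasDerivWithinAt_mul_sub_nonpos {f : ℝ → ℝ} {S : Set ℝ} {s t f' : ℝ}
    (hf : IsMaxOn f S s) (hS : Convex ℝ S) (hs : s ∈ S) (ht : t ∈ S)
    (hd : HasDerivWithinAt f f' S s) : f' * (t - s) ≤ 0 := by
  simpa [mul_comm] using hf.localize.hasFDerivWithinAt_nonpos hd.hasFDerivWithinAt
    (sub_mem_posTangentConeAt_of_segment_subset (hS.segment_subset hs ht))

theorem sum_min_le_sum_add_sum {β : Type*} [Fintype β] (f g : β → ℝ) {D0 D1 : Finset β}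
    (hdisj : Disjoint D0 D1) (hcover : ∀ x, x ∈ D0 ∨ x ∈ D1) :
    ∑ x, min (f x) (g x) ≤ ∑ x ∈ D1, f x + ∑ x ∈ D0, g x := by
  classical
  have huniv : D0 ∪ D1 = Finset.univ :=
    Finset.eq_univ_iff_forall.2 fun x => Finset.mem_union.2 (hcover x)
  rw [← huniv, Finset.sum_union hdisj, add_comm]
  exact add_le_add (Finset.sum_le_sum fun x _ => min_le_left _ _)
    (Finset.sum_le_sum fun x _ => min_le_right _ _)

theorem abs_log_sub_log_le_log_one_div {m a b : ℝ} (hm : 0 < m) (hma : m ≤ a) (ha : a ≤ 1)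
    (hmb : m ≤ b) (hb : b ≤ 1) : |log b - log a| ≤ log (1 / m) := by
  have hlog (x : ℝ) (hmx : m ≤ x) (hx : x ≤ 1) : log m ≤ log x ∧ log x ≤ 0 :=
    ⟨log_le_log hm hmx, log_nonpos (hm.le.trans hmx) hx⟩
  rw [one_div, log_inv, abs_le]
  constructor <;> linarith [hlog a hma ha, hlog b hmb hb]

section WeightedSums

variable {ι : Type*} [Fintype ι] {w : ι → ℝ}

theorem sum_mul_abs_le_sqrt_sum_mul_sq (hw0 : ∀ i, 0 ≤ w i) (hw1 : ∑ i, w i = 1) (X : ι → ℝ) :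
    ∑ i, w i * |X i| ≤ √(∑ i, w i * X i ^ 2) := by
  apply le_sqrt_of_sq_le
  simpa [sq_abs] using (even_two.convexOn_pow (𝕜 := ℝ)).map_sum_le (t := univ)
    (p := fun i => |X i|) (fun i _ => hw0 i) hw1 (fun _ _ => mem_univ _)

theorem sum_mul_sub_sum_sq_le (hw1 : ∑ i, w i = 1) (X : ι → ℝ) :
    ∑ i, w i * (X i - ∑ j, w j * X j) ^ 2 ≤ ∑ i, w i * X i ^ 2 := by
  set m := ∑ j, w j * X j
  have hexpand : ∑ i, w i * (X i - m) ^ 2 = ∑ i, w i * X i ^ 2 - m ^ 2 := by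
    have (i : ι) : w i * (X i - m) ^ 2 = w i * X i ^ 2 - 2 * m * (w i * X i) + m ^ 2 * w i := by
      ring
    rw [Finset.sum_congr rfl fun i _ => this i, Finset.sum_add_distrib, Finset.sum_sub_distrib,
      ← Finset.mul_sum, ← Finset.mul_sum, hw1]
    ring
  linarith [sq_nonneg m]

end WeightedSums

section ProductWeights

variable {ι Y : Type*} [Fintype ι] [DecidableEq ι] [Fintype Y] {w : ι → Y → ℝ}

theorem sum_prod_mul_prod_eq_prod_sum (hw : ∀ i, ∑ y, w i y = 1) (S : Finset ι)
    (A : ι → Y → ℝ) :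
    ∑ z : ι → Y, (∏ i, w i (z i)) * ∏ i ∈ S, A i (z i) = ∏ i ∈ S, ∑ y, w i y * A i y := by
  have hfactor (z : ι → Y) : (∏ i, w i (z i)) * ∏ i ∈ S, A i (z i) =
      ∏ i, w i (z i) * (if i ∈ S then A i (z i) else 1) := by
    rw [Finset.prod_mul_distrib, Fintype.prod_ite_mem]
  have hsum (i : ι) : ∑ y, w i y * (if i ∈ S then A i y else 1) =
      if i ∈ S then ∑ y, w i y * A i y else 1 := by
    split_ifs <;> simp [hw i]
  rw [Finset.sum_congr rfl fun z _ => hfactor z,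
    ← Fintype.prod_sum (fun i y => w i y * if i ∈ S then A i y else 1)]
  simp_rw [hsum, Fintype.prod_ite_mem]

theorem sum_prod_mul_sum_eq (hw : ∀ i, ∑ y, w i y = 1) (A : ι → Y → ℝ) :
    ∑ z : ι → Y, (∏ i, w i (z i)) * ∑ i, A i (z i) = ∑ i, ∑ y, w i y * A i y := by
  simp_rw [Finset.mul_sum]
  rw [Finset.sum_comm]
  refine Finset.sum_congr rfl fun i _ => ?_
  simpa using sum_prod_mul_prod_eq_prod_sum hw {i} A

theorem sum_prod_mul_sum_sq_eq (hw : ∀ i, ∑ y, w i y = 1) (X : ι → Y → ℝ)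
    (hX : ∀ i, ∑ y, w i y * X i y = 0) :
    ∑ z : ι → Y, (∏ i, w i (z i)) * (∑ i, X i (z i)) ^ 2 = ∑ i, ∑ y, w i y * X i y ^ 2 := by
  have hpair (i j : ι) : ∑ z : ι → Y, (∏ k, w k (z k)) * (X i (z i) * X j (z j)) =
      if i = j then ∑ y, w i y * X i y ^ 2 else 0 := by
    split_ifs with hij
    · subst hij
      simpa only [Finset.prod_singleton, sq] using
        sum_prod_mul_prod_eq_prod_sum hw {i} (fun _ y => X i y * X i y)
    · simpa [Finset.prod_pair hij, hX i] using sum_prod_mul_prod_eq_prod_sum hw {i, j} X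
  simp_rw [sq, Finset.sum_mul_sum, Finset.mul_sum]
  rw [Finset.sum_comm]
  refine Finset.sum_congr rfl fun i _ => ?_
  rw [Finset.sum_comm]
  simp [hpair, sq]

end ProductWeights

section Chernoff

variable {α : Type*} {p q : α → ℝ}

theorem chernoffTerm_nonneg (hp : ∀ x, 0 ≤ p x) (hq : ∀ x, 0 ≤ q x) (s : ℝ) (x : α) :
    0 ≤ chernoffTerm p q s x := by
  unfold chernoffTerm
  split_ifs
  exacts [le_rfl, mul_nonneg (rpow_nonneg (hp x) _) (rpow_nonneg (hq x) _)]

theorem ne_zero_of_chernoffTerm_ne_zero {s : ℝ} {x : α} (h : chernoffTerm p q s x ≠ 0) :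
    p x ≠ 0 ∧ q x ≠ 0 := by
  unfold chernoffTerm at h
  split_ifs at h with hpq
  · exact absurd rfl h
  · exact not_or.1 hpq

theorem chernoffTerm_eq_mul_exp {x : α} (hpx : 0 < p x) (hqx : 0 < q x) (s : ℝ) :
    chernoffTerm p q s x = p x * exp (s * logRatio p q x) := by
  rw [chernoffTerm, if_neg (by simp [hpx.ne', hqx.ne']), rpow_def_of_pos hpx,
    rpow_def_of_pos hqx, ← exp_add]
  nth_rewrite 2 [← exp_log hpx]
  rw [← exp_add, logRatio]
  ring_nf

theorem chernoffTerm_pos (hp : ∀ x, 0 ≤ p x) (hq : ∀ x, 0 ≤ q x) {x : α} (hpx : p x ≠ 0)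
    (hqx : q x ≠ 0) (s : ℝ) : 0 < chernoffTerm p q s x := by
  rw [chernoffTerm_eq_mul_exp ((hp x).lt_of_ne' hpx) ((hq x).lt_of_ne' hqx)]
  exact mul_pos ((hp x).lt_of_ne' hpx) (exp_pos _)

theorem hasDerivAt_chernoffTerm (hp : ∀ x, 0 ≤ p x) (hq : ∀ x, 0 ≤ q x) (x : α) (s : ℝ) :
    HasDerivAt (fun t => chernoffTerm p q t x) (chernoffTerm p q s x * logRatio p q x) s := by
  by_cases h : p x = 0 ∨ q x = 0
  · simpa [chernoffTerm, h] using hasDerivAt_const s (0 : ℝ)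
  · obtain ⟨hpx, hqx⟩ := not_or.1 h
    simp_rw [chernoffTerm_eq_mul_exp ((hp x).lt_of_ne' hpx) ((hq x).lt_of_ne' hqx), mul_assoc]
    exact ((hasDerivAt_mul_const _).exp).const_mul _

theorem min_eq_chernoffTerm_mul_exp {x : α} (hpx : 0 < p x) (hqx : 0 < q x) (s : ℝ) :
    min (p x) (q x) = chernoffTerm p q s x *
      exp (-(((2 * s - 1) * logRatio p q x + |logRatio p q x|) / 2)) := by
  have hexp : p x * exp (logRatio p q x) = q x := by
    rw [logRatio, exp_sub, exp_log hpx, exp_log hqx]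
    field_simp
  rw [chernoffTerm_eq_mul_exp hpx hqx, mul_assoc, ← exp_add]
  rcases le_total (p x) (q x) with h | h
  · have hL : 0 ≤ logRatio p q x := by
      rw [logRatio, sub_nonneg]
      exact log_le_log hpx h
    rw [min_eq_left h, abs_of_nonneg hL,
      show ∀ L, s * L + -(((2 * s - 1) * L + L) / 2) = 0 from fun L => by ring, exp_zero, mul_one]
  · have hL : logRatio p q x ≤ 0 := by
      rw [logRatio, sub_nonpos]
      exact log_le_log hqx h
    rw [min_eq_right h, abs_of_nonpos hL,
      show ∀ L, s * L + -(((2 * s - 1) * L + -L) / 2) = L from fun L => by ring, hexp]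

variable [Fintype α]

theorem cherSum_eq_sum_chernoffTerm (s : ℝ) : cherSum p q s = ∑ x, chernoffTerm p q s x := rfl

theorem tilted_eq_chernoffTerm_div (s : ℝ) (x : α) :
    tilted p q s x = chernoffTerm p q s x / cherSum p q s := rfl

theorem cherSum_pos (hp : ∀ x, 0 ≤ p x) (hq : ∀ x, 0 ≤ q x) (h : CommonSupport p q) (s : ℝ) :
    0 < cherSum p q s := by
  obtain ⟨x, hpx, hqx⟩ := h
  exact Finset.sum_pos' (fun y _ => chernoffTerm_nonneg hp hq s y)
    ⟨x, mem_univ x, chernoffTerm_pos hp hq hpx hqx s⟩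

theorem tilted_nonneg (hp : ∀ x, 0 ≤ p x) (hq : ∀ x, 0 ≤ q x) (s : ℝ) (x : α) :
    0 ≤ tilted p q s x :=
  div_nonneg (chernoffTerm_nonneg hp hq s x)
    (Finset.sum_nonneg fun y _ => chernoffTerm_nonneg hp hq s y)

theorem sum_tilted (hp : ∀ x, 0 ≤ p x) (hq : ∀ x, 0 ≤ q x) (h : CommonSupport p q) (s : ℝ) :
    ∑ x, tilted p q s x = 1 := by
  simp_rw [tilted_eq_chernoffTerm_div, ← Finset.sum_div, ← cherSum_eq_sum_chernoffTerm]
  exact div_self (cherSum_pos hp hq h s).ne'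

theorem hasDerivAt_dC (hp : ∀ x, 0 ≤ p x) (hq : ∀ x, 0 ≤ q x) (h : CommonSupport p q) (s : ℝ) :
    HasDerivAt (dC p q) (-∑ x, tilted p q s x * logRatio p q x) s := by
  have hsum : HasDerivAt (cherSum p q) (∑ x, chernoffTerm p q s x * logRatio p q x) s :=
    HasDerivAt.fun_sum fun x _ => hasDerivAt_chernoffTerm hp hq x s
  have hmean : ∑ x, tilted p q s x * logRatio p q x =
      (∑ x, chernoffTerm p q s x * logRatio p q x) / cherSum p q s := by
    rw [Finset.sum_div]
    exact Finset.sum_congr rfl fun x _ => div_mul_eq_mul_div _ _ _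
  rw [hmean]
  exact (hsum.log (cherSum_pos hp hq h s).ne').neg

theorem cherSum_mul_exp_le_sum_min (hp : ∀ x, 0 ≤ p x) (hq : ∀ x, 0 ≤ q x)
    (h : CommonSupport p q) (s : ℝ) :
    cherSum p q s * exp (-∑ x, tilted p q s x *
      (((2 * s - 1) * logRatio p q x + |logRatio p q x|) / 2)) ≤ ∑ x, min (p x) (q x) := by
  set g : α → ℝ := fun x => -(((2 * s - 1) * logRatio p q x + |logRatio p q x|) / 2)
  have hjensen : exp (∑ x, tilted p q s x * g x) ≤ ∑ x, tilted p q s x * exp (g x) := by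
    simpa using convexOn_exp.map_sum_le (t := univ) (fun x _ => tilted_nonneg hp hq s x)
      (sum_tilted hp hq h s) (fun x _ => mem_univ (g x))
  have hterm (x : α) : chernoffTerm p q s x * exp (g x) ≤ min (p x) (q x) := by
    by_cases hx : p x = 0 ∨ q x = 0
    · simp only [chernoffTerm, if_pos hx, zero_mul]
      exact le_min (hp x) (hq x)
    · obtain ⟨hpx, hqx⟩ := not_or.1 hx
      exact (min_eq_chernoffTerm_mul_exp ((hp x).lt_of_ne' hpx) ((hq x).lt_of_ne' hqx) s).ge
  calc cherSum p q s * exp (-∑ x, tilted p q s x *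
        (((2 * s - 1) * logRatio p q x + |logRatio p q x|) / 2))
      = cherSum p q s * exp (∑ x, tilted p q s x * g x) := by
        simp only [g, mul_neg, Finset.sum_neg_distrib]
    _ ≤ cherSum p q s * ∑ x, tilted p q s x * exp (g x) :=
        mul_le_mul_of_nonneg_left hjensen (cherSum_pos hp hq h s).le
    _ = ∑ x, chernoffTerm p q s x * exp (g x) := by
        rw [Finset.mul_sum]
        refine Finset.sum_congr rfl fun x _ => ?_
        rw [tilted_eq_chernoffTerm_div, ← mul_assoc, mul_div_cancel₀ _ (cherSum_pos hp hq h s).ne']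
    _ ≤ ∑ x, min (p x) (q x) := Finset.sum_le_sum fun x _ => hterm x

theorem continuous_dC (hp : ∀ x, 0 ≤ p x) (hq : ∀ x, 0 ≤ q x) (h : CommonSupport p q) :
    Continuous (dC p q) :=
  continuous_iff_continuousAt.2 fun s => (hasDerivAt_dC hp hq h s).continuousAt

theorem ne_zero_of_tilted_ne_zero {s : ℝ} {x : α} (h : tilted p q s x ≠ 0) :
    p x ≠ 0 ∧ q x ≠ 0 :=
  ne_zero_of_chernoffTerm_ne_zero (div_ne_zero_iff.1 h).1

theorem sum_min_pos (hp : ∀ x, 0 ≤ p x) (hq : ∀ x, 0 ≤ q x) (h : CommonSupport p q) :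
    0 < ∑ x, min (p x) (q x) := by
  obtain ⟨x, hpx, hqx⟩ := h
  exact Finset.sum_pos' (fun y _ => le_min (hp y) (hq y))
    ⟨x, mem_univ x, lt_min ((hp x).lt_of_ne' hpx) ((hq x).lt_of_ne' hqx)⟩

theorem neg_log_sum_min_le (hp : ∀ x, 0 ≤ p x) (hq : ∀ x, 0 ≤ q x) (h : CommonSupport p q)
    {s : ℝ} (hs : s ∈ Icc (0 : ℝ) 1) (hmax : IsMaxOn (dC p q) (Icc 0 1) s) :
    -log (∑ x, min (p x) (q x)) ≤ dC p q s +
      (∑ x, tilted p q s x * |logRatio p q x - ∑ y, tilted p q s y * logRatio p q y|) / 2 := by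
  set W := tilted p q s
  set L := logRatio p q
  set m := ∑ y, W y * L y
  have hW0 := tilted_nonneg hp hq s
  have hW1 : ∑ x, W x = 1 := sum_tilted hp hq h s
  have hopt : |m| ≤ -((2 * s - 1) * m) := by
    have hd := (hasDerivAt_dC hp hq h s).hasDerivWithinAt (s := Icc 0 1)
    have h0 := hmax.hasDerivWithinAt_mul_sub_nonpos (convex_Icc 0 1) hs ⟨le_rfl, zero_le_one⟩ hd
    have h1 := hmax.hasDerivWithinAt_mul_sub_nonpos (convex_Icc 0 1) hs ⟨zero_le_one, le_rfl⟩ hd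
    rcases abs_cases m with ⟨hm, -⟩ | ⟨hm, -⟩ <;> nlinarith
  have habs : ∑ x, W x * |L x| ≤ |m| + ∑ x, W x * |L x - m| := by
    calc ∑ x, W x * |L x| ≤ ∑ x, (W x * |m| + W x * |L x - m|) :=
          Finset.sum_le_sum fun x _ => by
            rw [← mul_add]
            exact mul_le_mul_of_nonneg_left (by linarith [abs_sub_abs_le_abs_sub (L x) m]) (hW0 x)
      _ = |m| + ∑ x, W x * |L x - m| := by
        rw [Finset.sum_add_distrib, ← Finset.sum_mul, hW1, one_mul]
  have hexpand : ∑ x, W x * (((2 * s - 1) * L x + |L x|) / 2) =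
      ((2 * s - 1) * m + ∑ x, W x * |L x|) / 2 := by
    rw [Finset.mul_sum, ← Finset.sum_add_distrib, Finset.sum_div]
    exact Finset.sum_congr rfl fun x _ => by ring
  have hC := cherSum_pos hp hq h s
  have hlow := cherSum_mul_exp_le_sum_min hp hq h s
  rw [hexpand] at hlow
  have hlog := log_le_log (mul_pos hC (exp_pos _)) hlow
  rw [log_mul hC.ne' (exp_pos _).ne', log_exp] at hlog
  rw [dC]
  linarith

end Chernoff

section Product

variable {X Y : Type*} [Fintype Y] {n : ℕ} {Q : X → Y → ℝ}

theorem prodDist_nonneg (hQ : ∀ x y, 0 ≤ Q x y) (w : Fin n → X) (z : Fin n → Y) :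
    0 ≤ prodDist Q w z :=
  Finset.prod_nonneg fun _ _ => hQ _ _

theorem prodDist_ne_zero_iff {w : Fin n → X} {z : Fin n → Y} :
    prodDist Q w z ≠ 0 ↔ ∀ i, Q (w i) (z i) ≠ 0 := by
  simp [prodDist, Finset.prod_ne_zero_iff]

theorem commonSupport_prodDist {w0 w1 : Fin n → X}
    (h : ∀ i, CommonSupport (Q (w0 i)) (Q (w1 i))) :
    CommonSupport (prodDist Q w0) (prodDist Q w1) := by
  choose z hz using h
  exact ⟨z, prodDist_ne_zero_iff.2 fun i => (hz i).1, prodDist_ne_zero_iff.2 fun i => (hz i).2⟩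

theorem chernoffTerm_prodDist (hQ : ∀ x y, 0 ≤ Q x y) (w0 w1 : Fin n → X) (s : ℝ)
    (z : Fin n → Y) :
    chernoffTerm (prodDist Q w0) (prodDist Q w1) s z =
      ∏ i, chernoffTerm (Q (w0 i)) (Q (w1 i)) s (z i) := by
  by_cases h : ∃ i, Q (w0 i) (z i) = 0 ∨ Q (w1 i) (z i) = 0
  · obtain ⟨i, hi⟩ := h
    have hP : prodDist Q w0 z = 0 ∨ prodDist Q w1 z = 0 :=
      hi.imp (Finset.prod_eq_zero (mem_univ i)) (Finset.prod_eq_zero (mem_univ i))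
    rw [chernoffTerm, if_pos hP, Finset.prod_eq_zero (mem_univ i) (by simp [chernoffTerm, hi])]
  · simp only [not_exists, not_or] at h
    rw [chernoffTerm, if_neg (by simp [prodDist_ne_zero_iff, h]), prodDist, prodDist,
      ← Real.finsetProd_rpow _ _ (fun _ _ => hQ _ _),
      ← Real.finsetProd_rpow _ _ (fun _ _ => hQ _ _),
      ← Finset.prod_mul_distrib]
    exact Finset.prod_congr rfl fun i _ => by rw [chernoffTerm, if_neg (not_or.2 (h i))]

theorem cherSum_prodDist (hQ : ∀ x y, 0 ≤ Q x y) (w0 w1 : Fin n → X) (s : ℝ) :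
    cherSum (prodDist Q w0) (prodDist Q w1) s = ∏ i, cherSum (Q (w0 i)) (Q (w1 i)) s := by
  simp_rw [cherSum_eq_sum_chernoffTerm, chernoffTerm_prodDist hQ]
  exact (Fintype.prod_sum _).symm

theorem tilted_prodDist (hQ : ∀ x y, 0 ≤ Q x y) (w0 w1 : Fin n → X) (s : ℝ) (z : Fin n → Y) :
    tilted (prodDist Q w0) (prodDist Q w1) s z = ∏ i, tilted (Q (w0 i)) (Q (w1 i)) s (z i) := by
  rw [tilted_eq_chernoffTerm_div, chernoffTerm_prodDist hQ, cherSum_prodDist hQ,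
    ← Finset.prod_div_distrib]
  rfl

theorem logRatio_prodDist {w0 w1 : Fin n → X} {z : Fin n → Y}
    (h0 : prodDist Q w0 z ≠ 0) (h1 : prodDist Q w1 z ≠ 0) :
    logRatio (prodDist Q w0) (prodDist Q w1) z = ∑ i, logRatio (Q (w0 i)) (Q (w1 i)) (z i) := by
  rw [logRatio, prodDist, prodDist, log_prod fun i _ => prodDist_ne_zero_iff.1 h0 i,
    log_prod fun i _ => prodDist_ne_zero_iff.1 h1 i, ← Finset.sum_sub_distrib]
  rfl

theorem sum_tilted_prodDist_mul_comp_logRatio (hQ : ∀ x y, 0 ≤ Q x y) (w0 w1 : Fin n → X)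
    (s : ℝ) (F : ℝ → ℝ) :
    ∑ z, tilted (prodDist Q w0) (prodDist Q w1) s z *
        F (logRatio (prodDist Q w0) (prodDist Q w1) z) =
      ∑ z : Fin n → Y, (∏ i, tilted (Q (w0 i)) (Q (w1 i)) s (z i)) *
        F (∑ i, logRatio (Q (w0 i)) (Q (w1 i)) (z i)) := by
  refine Finset.sum_congr rfl fun z _ => ?_
  rw [← tilted_prodDist hQ]
  by_cases hz : tilted (prodDist Q w0) (prodDist Q w1) s z = 0
  · simp [hz]
  · obtain ⟨h0, h1⟩ := ne_zero_of_tilted_ne_zero hz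
    rw [logRatio_prodDist h0 h1]

theorem sum_tilted_prodDist_mul_abs_sub_le (hQ : ∀ x y, 0 ≤ Q x y) {w0 w1 : Fin n → X}
    (hsupp : ∀ i, CommonSupport (Q (w0 i)) (Q (w1 i))) {c : ℝ} (hc0 : 0 ≤ c)
    (hc : ∀ i y, Q (w0 i) y ≠ 0 → Q (w1 i) y ≠ 0 → |logRatio (Q (w0 i)) (Q (w1 i)) y| ≤ c)
    (s : ℝ) :
    ∑ z, tilted (prodDist Q w0) (prodDist Q w1) s z *
        |logRatio (prodDist Q w0) (prodDist Q w1) z -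
          ∑ z', tilted (prodDist Q w0) (prodDist Q w1) s z' *
            logRatio (prodDist Q w0) (prodDist Q w1) z'| ≤ √n * c := by
  set W : Fin n → Y → ℝ := fun i => tilted (Q (w0 i)) (Q (w1 i)) s
  set ℓ : Fin n → Y → ℝ := fun i => logRatio (Q (w0 i)) (Q (w1 i))
  set m : Fin n → ℝ := fun i => ∑ y, W i y * ℓ i y
  have hW0 (i : Fin n) (y : Y) : 0 ≤ W i y := tilted_nonneg (hQ _) (hQ _) s y
  have hW1 (i : Fin n) : ∑ y, W i y = 1 := sum_tilted (hQ _) (hQ _) (hsupp i) s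
  have hmean : ∑ z, tilted (prodDist Q w0) (prodDist Q w1) s z *
      logRatio (prodDist Q w0) (prodDist Q w1) z = ∑ i, m i := by
    simpa using sum_tilted_prodDist_mul_comp_logRatio hQ w0 w1 s id |>.trans
      (sum_prod_mul_sum_eq hW1 ℓ)
  have hsecond (i : Fin n) : ∑ y, W i y * ℓ i y ^ 2 ≤ c ^ 2 := by
    calc ∑ y, W i y * ℓ i y ^ 2 ≤ ∑ y, W i y * c ^ 2 := Finset.sum_le_sum fun y _ => by
          by_cases hy : W i y = 0
          · simp [hy]
          · obtain ⟨h0, h1⟩ := ne_zero_of_tilted_ne_zero hy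
            exact mul_le_mul_of_nonneg_left
              (sq_le_sq.2 ((hc i y h0 h1).trans (le_abs_self c))) (hW0 i y)
      _ = c ^ 2 := by rw [← Finset.sum_mul, hW1, one_mul]
  rw [hmean, sum_tilted_prodDist_mul_comp_logRatio hQ w0 w1 s (fun t => |t - ∑ i, m i|)]
  simp_rw [← Finset.sum_sub_distrib]
  calc ∑ z : Fin n → Y, (∏ i, W i (z i)) * |∑ i, (ℓ i (z i) - m i)|
      ≤ √(∑ z : Fin n → Y, (∏ i, W i (z i)) * (∑ i, (ℓ i (z i) - m i)) ^ 2) :=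
        sum_mul_abs_le_sqrt_sum_mul_sq (fun z => Finset.prod_nonneg fun i _ => hW0 i (z i))
          (by simpa using sum_prod_mul_prod_eq_prod_sum hW1 ∅ ℓ) _
    _ = √(∑ i, ∑ y, W i y * (ℓ i y - m i) ^ 2) := by
        rw [sum_prod_mul_sum_sq_eq hW1 (fun i y => ℓ i y - m i) fun i => by
          simp [mul_sub, Finset.sum_sub_distrib, ← Finset.sum_mul, hW1, m]]
    _ ≤ √(∑ _i : Fin n, c ^ 2) :=
        sqrt_le_sqrt <| Finset.sum_le_sum fun i _ =>
          (sum_mul_sub_sum_sq_le (hW1 i) _).trans (hsecond i)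
    _ = √n * c := by simp [sqrt_mul (Nat.cast_nonneg n), sqrt_sq hc0]

end Product

/-- Corollary 1 of the paper. -/
theorem sgb_dmc_sum {X Y : Type*} [Fintype X] [Fintype Y] {n : ℕ}
    (Q : X → Y → ℝ) (hQ : IsChannel Q)
    (pmin : ℝ) (hpmin : MinTransChan Q pmin)
    (w0 w1 : Fin n → X)
    (hsupp : ∀ i, CommonSupport (Q (w0 i)) (Q (w1 i)))
    (D0 D1 : Finset (Fin n → Y)) (hdisj : Disjoint D0 D1)
    (hcover : ∀ x, x ∈ D0 ∨ x ∈ D1) :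
    - Real.log (∑ z ∈ D1, prodDist Q w0 z + ∑ z ∈ D0, prodDist Q w1 z) ≤
      sSup ((fun s : ℝ => dC (prodDist Q w0) (prodDist Q w1) s) '' Set.Icc 0 1) +
        Real.sqrt (2 * n) * Real.log (1 / pmin) + Real.log 4 := by
  obtain ⟨hpmin0, ⟨x0, y0, hpmin_eq⟩, hpmin_le⟩ := hpmin
  have hQ0 (x : X) (y : Y) : 0 ≤ Q x y := (hQ x).1 y
  have hQ1 (x : X) (y : Y) : Q x y ≤ 1 :=
    (hQ x).2 ▸ Finset.single_le_sum (fun y' _ => hQ0 x y') (mem_univ y)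
  have hc0 : 0 ≤ log (1 / pmin) := log_nonneg (one_le_one_div hpmin0 (hpmin_eq ▸ hQ1 x0 y0))
  have hP0 := prodDist_nonneg hQ0 w0
  have hP1 := prodDist_nonneg hQ0 w1
  have hsuppP := commonSupport_prodDist hsupp
  obtain ⟨s, hs, hmax⟩ := isCompact_Icc.exists_isMaxOn (nonempty_Icc.2 zero_le_one)
    (continuous_dC hP0 hP1 hsuppP).continuousOn
  have hsgb := neg_log_sum_min_le hP0 hP1 hsuppP hs hmax
  have hspread := sum_tilted_prodDist_mul_abs_sub_le hQ0 hsupp hc0 (fun i y h0 h1 =>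
    abs_log_sub_log_le_log_one_div hpmin0 (hpmin_le _ _ h0) (hQ1 _ _) (hpmin_le _ _ h1) (hQ1 _ _)) s
  have hsup : dC (prodDist Q w0) (prodDist Q w1) s ≤
      sSup ((fun s : ℝ => dC (prodDist Q w0) (prodDist Q w1) s) '' Set.Icc 0 1) :=
    le_csSup ((isCompact_Icc.image (continuous_dC hP0 hP1 hsuppP)).bddAbove) ⟨s, hs, rfl⟩
  have herr := neg_le_neg (log_le_log (sum_min_pos hP0 hP1 hsuppP)
    (sum_min_le_sum_add_sum (prodDist Q w0) (prodDist Q w1) hdisj hcover))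
  have hsqrt : √n ≤ √(2 * n) := sqrt_le_sqrt (by linarith [Nat.cast_nonneg (α := ℝ) n])
  have hlog4 : 0 ≤ log 4 := log_nonneg (by norm_num)
  linarith [mul_le_mul_of_nonneg_right hsqrt hc0, mul_nonneg (sqrt_nonneg n) hc0]

end
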